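/- The generating function of the sequence b_n = ∑_{d=0}^n (n-d choose d)(2d choose d) satisfies (∑_{n≥0} b_n x^n)² · (1 - 2x - 3x² + 4x³) = 1 as formal power series over ℚ. -/

import Mathlib

/-!
Put `u = x² / (1 - x)` and `C(y) = ∑ binom(2d, d) yᵈ`. Since the coefficient of `xⁿ` in
`x^{2d} / (1 - x)^{d+1}` is `binom(n - d, d)`, the generating function of `b` is `C(u) / (1 - x)`.
From `(n + 1) binom(2n+2, n+1) = 2 (2n + 1) binom(2n, n)` one gets `(1 - 4y) C' = 2C`, so
`C² (1 - 4y)` has derivative zero and equals `1`. Finally `1 - 4u = (1 - x - 4x²) / (1 - x)` and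
`(1 - x)(1 - x - 4x²) = 1 - 2x - 3x² + 4x³`.
-/

open PowerSeries

noncomputable def centralBinomSeries (R : Type*) [Semiring R] : R⟦X⟧ :=
  mk fun n => (n.centralBinom : R)

section CentralBinom

variable {R : Type*} [CommRing R]

theorem one_sub_four_X_mul_derivative_centralBinomSeries :
    (1 - 4 * X) * d⁄dX R (centralBinomSeries R) = 2 * centralBinomSeries R := by
  ext n
  have key := congrArg (Nat.cast : ℕ → R) (Nat.succ_mul_centralBinom_succ n)
  push_cast at key
  rw [← map_ofNat C 4, ← map_ofNat C 2, sub_mul, one_mul, mul_assoc, map_sub, coeff_C_mul,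
    coeff_C_mul]
  rcases n with _ | n
  · simpa [centralBinomSeries, coeff_derivative] using key
  · simp only [centralBinomSeries, coeff_derivative, coeff_mk, coeff_succ_X_mul]
    push_cast at key ⊢
    linear_combination key

variable [IsAddTorsionFree R]

theorem centralBinomSeries_sq_mul_one_sub_four_X :
    centralBinomSeries R ^ 2 * (1 - 4 * X) = 1 := by
  apply derivative.ext
  · have h4 : d⁄dX R (1 - 4 * X) = -4 := by
      simp [Derivation.leibniz, ← map_ofNat C 4]
    rw [Derivation.leibniz, Derivation.leibniz_pow, h4, Derivation.map_one_eq_zero]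
    simp only [smul_eq_mul, nsmul_eq_mul]
    linear_combination
      (2 * centralBinomSeries R) * one_sub_four_X_mul_derivative_centralBinomSeries (R := R)
  · simp [centralBinomSeries]

theorem subst_centralBinomSeries_sq_mul_one_sub_four_mul {u : R⟦X⟧}
    (hu : constantCoeff u = 0) : (centralBinomSeries R).subst u ^ 2 * (1 - 4 * u) = 1 := by
  have := congrArg (substAlgHom (HasSubst.of_constantCoeff_zero' hu))
    (centralBinomSeries_sq_mul_one_sub_four_X (R := R))
  rwa [map_mul, map_pow, map_sub, map_one, map_mul, map_ofNat, substAlgHom_X, coe_substAlgHom]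
    at this

end CentralBinom

section Subst

variable {R : Type*} [CommRing R]

theorem coeff_subst_eq_sum {u : R⟦X⟧} (hu : constantCoeff u = 0) (f : R⟦X⟧) {n N : ℕ}
    (hn : n < N) :
    coeff n (f.subst u) = ∑ d ∈ Finset.range N, coeff d f * coeff n (u ^ d) := by
  rw [coeff_subst' (HasSubst.of_constantCoeff_zero' hu)]
  apply finsum_eq_sum_of_support_subset
  intro d hd
  obtain ⟨v, rfl⟩ := X_dvd_iff.mpr hu
  simp only [Function.mem_support, mul_pow, coeff_X_pow_mul', smul_eq_mul] at hd
  simp only [Finset.coe_range, Set.mem_Iio]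
  by_contra h
  exact hd (by rw [if_neg (by omega), mul_zero])

theorem coeff_mul_subst {u : R⟦X⟧} (hu : constantCoeff u = 0) (g f : R⟦X⟧) (n : ℕ) :
    coeff n (g * f.subst u) =
      ∑ d ∈ Finset.range (n + 1), coeff d f * coeff n (g * u ^ d) := by
  simp only [coeff_mul, Finset.mul_sum]
  rw [Finset.sum_comm]
  refine Finset.sum_congr rfl fun p hp => ?_
  have hp : p.2 < n + 1 := by rw [Finset.HasAntidiagonal.mem_antidiagonal] at hp; omega
  rw [coeff_subst_eq_sum hu f hp, Finset.mul_sum]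
  exact Finset.sum_congr rfl fun d _ => by ring

theorem coeff_mk_one_mul_X_sq_mul_mk_one_pow (d n : ℕ) :
    coeff n ((mk 1 : R⟦X⟧) * (X ^ 2 * mk 1) ^ d) = ((n - d).choose d : R) := by
  rw [mul_pow, ← pow_mul, mul_left_comm, ← pow_succ', mk_one_pow_eq_mk_choose_add,
    coeff_X_pow_mul', coeff_mk]
  split_ifs with h
  · congr 2; omega
  · rw [Nat.choose_eq_zero_of_lt (by omega), Nat.cast_zero]

theorem mk_one_mul_subst_X_sq_mul_mk_one (a : ℕ → R) :
    mk 1 * (mk a).subst (X ^ 2 * mk 1 : R⟦X⟧) =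
      mk fun n => ∑ d ∈ Finset.range (n + 1), ((n - d).choose d : R) * a d := by
  ext n
  rw [coeff_mul_subst (by simp), coeff_mk]
  exact Finset.sum_congr rfl fun d _ => by
    rw [coeff_mk, coeff_mk_one_mul_X_sq_mul_mk_one_pow, mul_comm]

end Subst

theorem a026569_gf_sq :
    (PowerSeries.mk fun n =>
        ∑ d ∈ Finset.range (n + 1), ((n - d).choose d : ℚ) * ((2 * d).choose d : ℚ)) ^ 2 *
      (1 - 2 * PowerSeries.X - 3 * PowerSeries.X ^ 2 + 4 * PowerSeries.X ^ 3) = 1 := by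
  set u : ℚ⟦X⟧ := X ^ 2 * mk 1
  set S : ℚ⟦X⟧ := (centralBinomSeries ℚ).subst u
  have hB : (mk fun n => ∑ d ∈ Finset.range (n + 1),
      ((n - d).choose d : ℚ) * ((2 * d).choose d : ℚ)) = mk 1 * S := by
    simp only [S, u, centralBinomSeries, mk_one_mul_subst_X_sq_mul_mk_one,
      Nat.centralBinom_eq_two_mul_choose]
  have hgeom : (mk 1 : ℚ⟦X⟧) * (1 - X) = 1 := mk_one_mul_one_sub_eq_one ℚ
  have hS : S ^ 2 * (1 - 4 * u) = 1 :=
    subst_centralBinomSeries_sq_mul_one_sub_four_mul (by simp [u])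
  rw [hB]
  linear_combination (S ^ 2 * (mk 1 * (1 - X) + 1 - 4 * u)) * hgeom + hS
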